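/- Let n ≥ 3 and A ∈ M_n. Then λ ∈ ℝ is a boundary Lorentz eigenvalue of A if and only if there exist ξ ∈ ℝ^{n−1} with ‖ξ‖ = 1 and a real number s ≥ 0 such that (A − λI) applied to the vector (ξ, 1) ∈ ℝⁿ equals s·(−ξ, 1). -/

import Mathlib

open Matrix

noncomputable section

/-- Euclidean norm of a vector in `ℝ^n`. -/
def eucNormL {n : ℕ} (x : Fin n → ℝ) : ℝ := Real.sqrt (∑ i, x i ^ 2)

/-- The Lorentz cone in `ℝ^(n+1)`: vectors `(ξ, η)` with `‖ξ‖ ≤ η`. -/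
def lorentzCone (n : ℕ) : Set (Fin (n + 1) → ℝ) :=
  {x | eucNormL (fun i : Fin n => x i.castSucc) ≤ x (Fin.last n)}

/-- `x` is a Lorentz eigenvector of `A` associated with the Lorentz eigenvalue `l`. -/
def IsLEigenvector {n : ℕ} (A : Matrix (Fin (n + 1)) (Fin (n + 1)) ℝ) (l : ℝ)
    (x : Fin (n + 1) → ℝ) : Prop :=
  x ≠ 0 ∧ x ∈ lorentzCone n ∧ (A - l • 1) *ᵥ x ∈ lorentzCone n ∧
    x ⬝ᵥ ((A - l • 1) *ᵥ x) = 0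

/-- The Lorentz spectrum of `A`. -/
def sigmaL {n : ℕ} (A : Matrix (Fin (n + 1)) (Fin (n + 1)) ℝ) : Set ℝ :=
  {l | ∃ x, IsLEigenvector A l x}

/-- The interior Lorentz spectrum of `A`. -/
def sigmaInt {n : ℕ} (A : Matrix (Fin (n + 1)) (Fin (n + 1)) ℝ) : Set ℝ :=
  {l | ∃ x, IsLEigenvector A l x ∧
    eucNormL (fun i : Fin n => x i.castSucc) < x (Fin.last n)}

/-- The boundary Lorentz spectrum of `A`. -/
def sigmaBd {n : ℕ} (A : Matrix (Fin (n + 1)) (Fin (n + 1)) ℝ) : Set ℝ :=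
  {l | ∃ x, IsLEigenvector A l x ∧
    eucNormL (fun i : Fin n => x i.castSucc) = x (Fin.last n)}

/-- The block matrix `[X u; vᵀ a]` in `M₃`. -/
def blk (X : Matrix (Fin 2) (Fin 2) ℝ) (u v : Fin 2 → ℝ) (a : ℝ) :
    Matrix (Fin 3) (Fin 3) ℝ :=
  Matrix.of (Fin.snoc (fun i : Fin 2 => Fin.snoc (X i) (u i)) (Fin.snoc v a))

theorem boundary_L_eigenvalue_iff {m : ℕ} (hm : 2 ≤ m)
    (A : Matrix (Fin (m + 1)) (Fin (m + 1)) ℝ) (l : ℝ) :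
    l ∈ sigmaBd A ↔
      ∃ (ξ : Fin m → ℝ) (s : ℝ), eucNormL ξ = 1 ∧ 0 ≤ s ∧
        (A - l • 1) *ᵥ (Fin.snoc ξ 1) = s • (Fin.snoc (-ξ) 1 : Fin (m + 1) → ℝ) := by
  constructor
  · rintro ⟨x, ⟨hx0, hxK, hyK, hdot⟩, hbd⟩
    set y := (A - l • 1) *ᵥ x with hy
    set η := x (Fin.last m) with hη
    set a := y (Fin.last m) with ha
    have hS : ∑ i : Fin m, x i.castSucc ^ 2 = η ^ 2 := by
      have h1 : Real.sqrt (∑ i : Fin m, x i.castSucc ^ 2) = η := hbd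
      rw [← h1, Real.sq_sqrt (Finset.sum_nonneg fun i _ => sq_nonneg _)]
    have hηpos : 0 < η := by
      have h0 : 0 ≤ η := by
        rw [← hbd]; unfold eucNormL; exact Real.sqrt_nonneg _
      rcases lt_or_eq_of_le h0 with h | h
      · exact h
      · exfalso
        apply hx0
        have hS0 : ∑ i : Fin m, x i.castSucc ^ 2 = 0 := by rw [hS, ← h]; ring
        have hz : ∀ i : Fin m, x i.castSucc = 0 := by
          intro i
          have := (Finset.sum_eq_zero_iff_of_nonneg
            (fun i _ => sq_nonneg (x i.castSucc))).mp hS0 i (Finset.mem_univ i)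
          exact pow_eq_zero_iff (by norm_num) |>.mp this
        funext i
        refine Fin.lastCases ?_ ?_ i
        · simpa using h.symm
        · intro i; simpa using hz i
    have hann : 0 ≤ a := le_trans (Real.sqrt_nonneg _) hyK
    have hu2 : ∑ i : Fin m, y i.castSucc ^ 2 ≤ a ^ 2 := by
      have h1 : Real.sqrt (∑ i : Fin m, y i.castSucc ^ 2) ≤ a := hyK
      calc ∑ i : Fin m, y i.castSucc ^ 2
          = Real.sqrt (∑ i : Fin m, y i.castSucc ^ 2) ^ 2 :=
            (Real.sq_sqrt (Finset.sum_nonneg fun i _ => sq_nonneg _)).symm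
        _ ≤ a ^ 2 := pow_le_pow_left₀ (Real.sqrt_nonneg _) h1 2
    have hxy : ∑ i : Fin m, x i.castSucc * y i.castSucc = -(η * a) := by
      have := hdot
      rw [dotProduct] at this
      rw [Fin.sum_univ_castSucc] at this
      linarith
    set c := a / η with hc
    have hcη : c * η = a := div_mul_cancel₀ a hηpos.ne'
    have hT : ∑ i : Fin m, (y i.castSucc + c * x i.castSucc) ^ 2 = 0 := by
      have hexp : ∑ i : Fin m, (y i.castSucc + c * x i.castSucc) ^ 2 =
          (∑ i : Fin m, y i.castSucc ^ 2) +
          2 * c * (∑ i : Fin m, x i.castSucc * y i.castSucc) +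
          c ^ 2 * (∑ i : Fin m, x i.castSucc ^ 2) := by
        rw [Finset.mul_sum, Finset.mul_sum, ← Finset.sum_add_distrib,
          ← Finset.sum_add_distrib]
        apply Finset.sum_congr rfl
        intro i _
        ring
      have hc2 : c ^ 2 * η ^ 2 = a ^ 2 := by
        rw [← mul_pow, hcη]
      have h2c : 2 * c * -(η * a) = -(2 * a ^ 2) := by
        have : c * η = a := hcη
        nlinarith [this]
      have hle : ∑ i : Fin m, (y i.castSucc + c * x i.castSucc) ^ 2 ≤ 0 := by
        rw [hexp, hxy, hS, hc2, h2c]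
        linarith
      have hge : 0 ≤ ∑ i : Fin m, (y i.castSucc + c * x i.castSucc) ^ 2 :=
        Finset.sum_nonneg fun i _ => sq_nonneg _
      linarith
    have hui : ∀ i : Fin m, y i.castSucc = -(c * x i.castSucc) := by
      intro i
      have := (Finset.sum_eq_zero_iff_of_nonneg
        (fun i _ => sq_nonneg (y i.castSucc + c * x i.castSucc))).mp hT i
        (Finset.mem_univ i)
      have h0 : y i.castSucc + c * x i.castSucc = 0 :=
        pow_eq_zero_iff (by norm_num) |>.mp this
      linarith
    refine ⟨fun i => η⁻¹ * x i.castSucc, c, ?_, ?_, ?_⟩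
    · unfold eucNormL
      have : ∑ i : Fin m, (η⁻¹ * x i.castSucc) ^ 2 = 1 := by
        have : ∑ i : Fin m, (η⁻¹ * x i.castSucc) ^ 2 =
            η⁻¹ ^ 2 * ∑ i : Fin m, x i.castSucc ^ 2 := by
          rw [Finset.mul_sum]; apply Finset.sum_congr rfl; intro i _; ring
        rw [this, hS]
        field_simp
      rw [this, Real.sqrt_one]
    · exact div_nonneg hann hηpos.le
    · have hsnoc : (Fin.snoc (fun i => η⁻¹ * x i.castSucc) 1 : Fin (m + 1) → ℝ)
          = η⁻¹ • x := by
        funext i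
        refine Fin.lastCases ?_ ?_ i
        · simp [Pi.smul_apply, smul_eq_mul, ← hη, inv_mul_cancel₀ hηpos.ne']
        · intro i; simp
      rw [hsnoc, Matrix.mulVec_smul, ← hy]
      funext i
      refine Fin.lastCases ?_ ?_ i
      · simp only [Pi.smul_apply, smul_eq_mul, Fin.snoc_last, ← ha]
        rw [hc]
        field_simp
      · intro i
        simp only [Pi.smul_apply, smul_eq_mul, Fin.snoc_castSucc, Pi.neg_apply]
        rw [hui i]
        ring
  · rintro ⟨ξ, s, hξ, hs, heq⟩
    have hS : ∑ i : Fin m, ξ i ^ 2 = 1 := by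
      have h1 : Real.sqrt (∑ i : Fin m, ξ i ^ 2) = 1 := hξ
      rw [← Real.sq_sqrt (Finset.sum_nonneg fun i _ => sq_nonneg (ξ i)), h1]; norm_num
    refine ⟨Fin.snoc ξ 1, ⟨?_, ?_, ?_, ?_⟩, ?_⟩
    · intro h
      have := congrFun h (Fin.last m)
      simp at this
    · show eucNormL _ ≤ _
      have h1 : (fun i : Fin m => (Fin.snoc ξ 1 : Fin (m + 1) → ℝ) i.castSucc) = ξ := by
        funext i; simp
      rw [h1, hξ]
      simp
    · show eucNormL _ ≤ _
      rw [heq]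
      have h1 : (fun i : Fin m =>
          (s • (Fin.snoc (-ξ) 1 : Fin (m + 1) → ℝ)) i.castSucc) = fun i => -(s * ξ i) := by
        funext i; simp
      rw [h1]
      have h2 : (s • (Fin.snoc (-ξ) 1 : Fin (m + 1) → ℝ)) (Fin.last m) = s := by simp
      rw [h2]
      unfold eucNormL
      have h3 : ∑ i : Fin m, (-(s * ξ i)) ^ 2 = s ^ 2 := by
        have : ∑ i : Fin m, (-(s * ξ i)) ^ 2 = s ^ 2 * ∑ i : Fin m, ξ i ^ 2 := by
          rw [Finset.mul_sum]; apply Finset.sum_congr rfl; intro i _; ring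
        rw [this, hS, mul_one]
      rw [h3, Real.sqrt_sq hs]
    · rw [heq, dotProduct, Fin.sum_univ_castSucc]
      have : ∀ i : Fin m, (Fin.snoc ξ 1 : Fin (m + 1) → ℝ) i.castSucc *
          (s • (Fin.snoc (-ξ) 1 : Fin (m + 1) → ℝ)) i.castSucc = -(s * ξ i ^ 2) := by
        intro i; simp; ring
      rw [Finset.sum_congr rfl fun i _ => this i]
      simp [Finset.sum_neg_distrib, ← Finset.mul_sum, hS]
    · have h1 : (fun i : Fin m => (Fin.snoc ξ 1 : Fin (m + 1) → ℝ) i.castSucc) = ξ := by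
        funext i; simp
      rw [h1, hξ]
      simp
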